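/- arXiv:2409.19279 — 2 statements merged into one kernel-verified Lean document; each statement's English description precedes it below -/
import Mathlib

section
/- (Part II of the proof of Theorem 2: initial step.) Suppose the algorithm is initialized with X₀ = Z₀ ∈ H and the first iteration sets X₀⁺ = X₀, Z₁ = Z₀, X₁ = X₀. Let s₀, s₁ satisfy 0 < s₀ ≤ s₁ ≤ 2/L̃₁ and suppose r₁ ≥ 0, where r₁ = −‖(2θ₁h)^{−β}·∇F(X*)‖² + 2·⟨(2θ₁h)^{−β}·∇F(X*), (2θ₁h)^{−β}·∇F(X*) − G₁(X₁)⟩. Then V₁ ≤ V'₀, where V'₀ = (1/s₀)·‖Z₁ − X*‖². -/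
open scoped RealInnerProductSpace

noncomputable section

/-- `θ_k = k/2`. -/
def thetaSeq (k : ℕ) : ℝ := (k : ℝ) / 2

/-- `c_k = θ_{k+1} / (θ_{k+1}² − θ_k²)`. -/
def cSeq (k : ℕ) : ℝ := thetaSeq (k + 1) / (thetaSeq (k + 1) ^ 2 - thetaSeq k ^ 2)

/-- `A_k = c_k · θ_k²`. -/
def ASeq (k : ℕ) : ℝ := cSeq k * thetaSeq k ^ 2

variable {H : Type*} [NormedAddCommGroup H] [InnerProductSpace ℝ H] [FiniteDimensional ℝ H]

/-- `G_k(Y) = (2θ_k h)^{−β} ∇F(Y) + L̃Y`. -/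
def Gmap (h β : ℝ) (F : H → ℝ) (L : H →L[ℝ] H) (k : ℕ) (Y : H) : H :=
  ((2 * thetaSeq k * h) ^ (-β)) • gradient F Y + L Y

/-- `L̃_k = 2·max{λ̄, (kh)^{−β}·L_f}`. -/
def LSmooth (lambar Lf h β : ℝ) (k : ℕ) : ℝ :=
  2 * max lambar (((k : ℝ) * h) ^ (-β) * Lf)

/-- Lyapunov function `V_k` (for `k ≥ 1`). -/
def VSeq (h β : ℝ) (F : H → ℝ) (L : H →L[ℝ] H) (Xs : H) (X Z : ℕ → H) (s : ℕ → ℝ)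
    (k : ℕ) : ℝ :=
  2 * ASeq k * (((2 * thetaSeq k * h) ^ (-β)) * (F (X k) - F Xs)
      + (1 / 2) * ⟪X k - Xs, L (X k - Xs)⟫
      - (s k / 4) * ‖Gmap h β F L k (X k)‖ ^ 2)
    + (1 / s k) * ‖Z (k + 1) - Xs‖ ^ 2

/-- `a_{k+1}` (indexed so that `aSeq … k = a_{k+1}`). -/
def aSeq (h β : ℝ) (F : H → ℝ) (L : H →L[ℝ] H) (Xs : H) (X : ℕ → H) (k : ℕ) : ℝ :=
  ((2 * thetaSeq k * h) ^ (-β)) * (F (X k) - F Xs)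
    + (1 / 2) * ⟪X k - Xs, L (X k - Xs)⟫
    - ((2 * thetaSeq (k + 1) * h) ^ (-β)) * (F (X (k + 1)) - F Xs)
    - (1 / 2) * ⟪X (k + 1) - Xs, L (X (k + 1) - Xs)⟫
    - ⟪Gmap h β F L (k + 1) (X (k + 1)), X k - X (k + 1)⟫

/-- `b_{k+1}` (indexed so that `bSeq … k = b_{k+1}`). -/
def bSeq (h β : ℝ) (F : H → ℝ) (L : H →L[ℝ] H) (X : ℕ → H) (k : ℕ) : ℝ :=
  ‖Gmap h β F L k (X k) - Gmap h β F L (k + 1) (X (k + 1))‖ ^ 2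

/-- `ã_{k+1}` (indexed so that `atilSeq … k = ã_{k+1}`). -/
def atilSeq (h β : ℝ) (F : H → ℝ) (L : H →L[ℝ] H) (Xs : H) (X : ℕ → H) (s : ℕ → ℝ)
    (k : ℕ) : ℝ :=
  aSeq h β F L Xs X k
    + (s k / 2) * ⟪Gmap h β F L (k + 1) (X (k + 1)), Gmap h β F L k (X k)⟫

/-- `b̃_{k+1}` (indexed so that `btilSeq … k = b̃_{k+1}`). -/
def btilSeq (h β : ℝ) (F : H → ℝ) (L : H →L[ℝ] H) (X : ℕ → H) (k : ℕ) : ℝ :=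
  ‖Gmap h β F L k (X k)‖ ^ 2 + ‖Gmap h β F L (k + 1) (X (k + 1))‖ ^ 2

/-- `w_{k+1}` (indexed so that `wSeq … k = w_{k+1}`). -/
def wSeq (h β : ℝ) (F : H → ℝ) (L : H →L[ℝ] H) (X : ℕ → H) (k : ℕ) : ℝ :=
  ⟪Gmap h β F L (k + 1) (X (k + 1)), Gmap h β F L k (X k)⟫

/-- `r_{k+1}` (indexed so that `rSeq … k = r_{k+1}`). -/
def rSeq (h β : ℝ) (F : H → ℝ) (L : H →L[ℝ] H) (Xs : H) (X : ℕ → H) (k : ℕ) : ℝ :=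
  -‖((2 * thetaSeq (k + 1) * h) ^ (-β)) • gradient F Xs‖ ^ 2
    + 2 * ⟪((2 * thetaSeq (k + 1) * h) ^ (-β)) • gradient F Xs,
        ((2 * thetaSeq (k + 1) * h) ^ (-β)) • gradient F Xs
          - Gmap h β F L (k + 1) (X (k + 1))⟫

/-- `q_{k+1}` (indexed so that `qSeq … k = q_{k+1}`). -/
def qSeq (h β : ℝ) (F : H → ℝ) (L : H →L[ℝ] H) (Xs : H) (X : ℕ → H) (s : ℕ → ℝ)
    (k : ℕ) : ℝ :=
  aSeq h β F L Xs X k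
    - (s (k + 1) / 4) * ‖Gmap h β F L k (X k)‖ ^ 2
    - (s (k + 1) / 4) * ‖Gmap h β F L (k + 1) (X (k + 1))‖ ^ 2
    + (s k / 2) * ⟪Gmap h β F L (k + 1) (X (k + 1)), Gmap h β F L k (X k)⟫

/-!
Put `c = (2θ₁h)^{-β}` and `φ = c F + ½⟪·, L̃ ·⟫`. Then `G₁` is the gradient of the convex function
`φ`, and it is `(c L_f + λ̄)`-Lipschitz, hence `L̃₁`-Lipschitz. Such gradients are co-coercive:
`φ x + ⟪∇φ x, y - x⟫ + ‖∇φ y - ∇φ x‖² / (2 L̃₁) ≤ φ y`. Take `x = X₁` and `y = X*`, where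
`∇φ X* = c ∇F(X*)` because `L̃X* = 0`; `r₁ ≥ 0` says exactly that `‖c ∇F(X*) - G₁X₁‖² ≥ ‖G₁X₁‖²`,
so with `s₁ ≤ 2/L̃₁` we get `φ X₁ - φ X* + (s₁/4)‖G₁X₁‖² ≤ ⟪G₁X₁, X₁ - X*⟫`. Since `Z₁ = X₁` and
`A₁ = 1/3`, expanding `‖Z₂ - X*‖²` turns this into `V₁ ≤ ‖Z₁ - X*‖²/s₁ ≤ ‖Z₁ - X*‖²/s₀`.
-/

open Set

section GradientInequalities

variable {E : Type*} [NormedAddCommGroup E] [InnerProductSpace ℝ E] [CompleteSpace E]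
  {φ : E → ℝ}

theorem HasGradientAt.hasDerivAt_comp_add_smul {g x d : E} {t : ℝ}
    (hφ : HasGradientAt φ g (x + t • d)) :
    HasDerivAt (fun t : ℝ => φ (x + t • d)) ⟪g, d⟫ t := by
  have hline : HasDerivAt (fun t : ℝ => x + t • d) d t := by
    simpa using ((hasDerivAt_id t).smul_const d).const_add x
  have := (hasGradientAt_iff_hasFDerivAt.mp hφ).comp_hasDerivAt t hline
  rw [InnerProductSpace.toDual_apply_apply] at this
  exact this

theorem ConvexOn.add_inner_le_of_hasGradientAt (hφ : ConvexOn ℝ univ φ) {g x : E}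
    (hg : HasGradientAt φ g x) (y : E) :
    φ x + ⟪g, y - x⟫ ≤ φ y := by
  have hline : ConvexOn ℝ univ (fun t : ℝ => φ (x + t • (y - x))) := by
    simpa [Function.comp_def, AffineMap.lineMap_apply_module', add_comm]
      using hφ.comp_affineMap (AffineMap.lineMap x y)
  have hslope := hline.le_slope_of_hasDerivAt (mem_univ 0) (mem_univ 1) one_pos
    (HasGradientAt.hasDerivAt_comp_add_smul (by simpa using hg))
  simp only [slope_def_field, zero_smul, one_smul, add_zero, add_sub_cancel, sub_zero, div_one]
    at hslope
  linarith

theorem le_add_inner_add_of_lipschitz_gradient {g : E → E}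
    (hg : ∀ z, HasGradientAt φ (g z) z) {M : ℝ} (hlip : ∀ a b, ‖g a - g b‖ ≤ M * ‖a - b‖)
    (x y : E) :
    φ y ≤ φ x + ⟪g x, y - x⟫ + M / 2 * ‖y - x‖ ^ 2 := by
  set d := y - x
  set ψ : ℝ → ℝ := fun t => φ (x + t • d) - t * ⟪g x, d⟫ - M * ‖d‖ ^ 2 / 2 * t ^ 2
  have hψ : ∀ t, HasDerivAt ψ (⟪g (x + t • d), d⟫ - ⟪g x, d⟫ - M * ‖d‖ ^ 2 * t) t := by
    intro t
    have hlin := (hasDerivAt_id t).mul_const ⟪g x, d⟫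
    have hquad := (hasDerivAt_pow 2 t).const_mul (M * ‖d‖ ^ 2 / 2)
    refine ((((hg (x + t • d)).hasDerivAt_comp_add_smul).sub hlin).sub hquad).congr_deriv ?_
    simp only [one_mul]
    push_cast
    ring
  have hψ' : ∀ t ∈ interior (Icc (0 : ℝ) 1),
      ⟪g (x + t • d), d⟫ - ⟪g x, d⟫ - M * ‖d‖ ^ 2 * t ≤ 0 := by
    intro t ht
    rw [interior_Icc] at ht
    have := (real_inner_le_norm (g (x + t • d) - g x) d).trans
      (mul_le_mul_of_nonneg_right (hlip (x + t • d) x) (norm_nonneg d))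
    rw [inner_sub_left, add_sub_cancel_left, norm_smul, Real.norm_of_nonneg ht.1.le] at this
    linarith
  have h10 : ψ 1 ≤ ψ 0 := antitoneOn_of_hasDerivWithinAt_nonpos (convex_Icc 0 1)
    (fun t _ => (hψ t).continuousAt.continuousWithinAt)
    (fun t _ => (hψ t).hasDerivWithinAt) hψ' (left_mem_Icc.2 zero_le_one)
    (right_mem_Icc.2 zero_le_one) zero_le_one
  have hψ0 : ψ 0 = φ x := by simp [ψ]
  have hψ1 : ψ 1 = φ y - ⟪g x, y - x⟫ - M / 2 * ‖y - x‖ ^ 2 := by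
    simp only [ψ, d, one_smul, add_sub_cancel, one_mul, one_pow, mul_one]
    ring
  linarith

theorem add_inner_add_sq_norm_le_of_lipschitz_gradient {g : E → E}
    (hg : ∀ z, HasGradientAt φ (g z) z) (hsupp : ∀ x y, φ x + ⟪g x, y - x⟫ ≤ φ y)
    {M : ℝ} (hM : 0 < M) (hlip : ∀ a b, ‖g a - g b‖ ≤ M * ‖a - b‖) (x y : E) :
    φ x + ⟪g x, y - x⟫ + 1 / (2 * M) * ‖g y - g x‖ ^ 2 ≤ φ y := by
  -- compare `φ` at the gradient step `z = y - (g y - g x) / M` from above and from below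
  set u := g y - g x
  set z := y - (1 / M) • u
  have hup := le_add_inner_add_of_lipschitz_gradient hg hlip y z
  have hlow := hsupp x z
  have hzy : z - y = -((1 / M) • u) := sub_sub_cancel_left y _
  have hzx : z - x = (y - x) - (1 / M) • u := sub_right_comm y _ x
  rw [hzy, inner_neg_right, real_inner_smul_right, norm_neg, norm_smul,
    Real.norm_of_nonneg (by positivity)] at hup
  rw [hzx, inner_sub_right, real_inner_smul_right] at hlow
  have hu : ⟪g y, u⟫ - ⟪g x, u⟫ = ‖u‖ ^ 2 := by
    rw [← inner_sub_left, real_inner_self_eq_norm_sq]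
  have hquad : M / 2 * (1 / M * ‖u‖) ^ 2 = 1 / (2 * M) * ‖u‖ ^ 2 := by field_simp
  have hlin : 1 / M * ⟪g y, u⟫ - 1 / M * ⟪g x, u⟫ = 2 * (1 / (2 * M) * ‖u‖ ^ 2) := by
    rw [← mul_sub, hu]; field_simp
  linarith

end GradientInequalities

section PenalizedObjective

variable {E : Type*} [NormedAddCommGroup E] [InnerProductSpace ℝ E] [CompleteSpace E]
  {F : E → ℝ} {L : E →L[ℝ] E} {c : ℝ}

def penalizedObjective (c : ℝ) (F : E → ℝ) (L : E →L[ℝ] E) (Y : E) : ℝ :=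
  c * F Y + 1 / 2 * ⟪Y, L Y⟫

theorem hasGradientAt_penalizedObjective {x : E} (hF : DifferentiableAt ℝ F x)
    (hL : (L : E →ₗ[ℝ] E).IsSymmetric) :
    HasGradientAt (penalizedObjective c F L) (c • gradient F x + L x) x := by
  have hquad := ((hasFDerivAt_id x).inner ℝ L.hasFDerivAt).const_mul (1 / 2 : ℝ)
  have := ((hasGradientAt_iff_hasFDerivAt.mp hF.hasGradientAt).const_mul c).add hquad
  refine hasGradientAt_iff_hasFDerivAt.mpr (this.congr_fderiv ?_)
  ext v
  have hsym : ⟪L x, v⟫ = ⟪x, L v⟫ := hL x v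
  simp only [add_apply, smul_apply, ContinuousLinearMap.comp_apply,
    ContinuousLinearMap.prod_apply, ContinuousLinearMap.id_apply, id_eq, fderivInnerCLM_apply,
    InnerProductSpace.toDual_apply_apply, inner_add_left, real_inner_smul_left, smul_eq_mul,
    real_inner_comm (L x) v, hsym]
  ring

theorem penalizedObjective_add_inner_le (hconv : ConvexOn ℝ univ F) (hF : Differentiable ℝ F)
    (hc : 0 ≤ c) (hL : L.IsPositive) (x y : E) :
    penalizedObjective c F L x + ⟪c • gradient F x + L x, y - x⟫ ≤ penalizedObjective c F L y := by
  have hsupp := mul_le_mul_of_nonneg_left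
    (hconv.add_inner_le_of_hasGradientAt (hF x).hasGradientAt y) hc
  have hquad : 1 / 2 * ⟪y, L y⟫ - 1 / 2 * ⟪x, L x⟫ - ⟪L x, y - x⟫
      = 1 / 2 * ⟪y - x, L (y - x)⟫ := by
    simp only [map_sub, inner_sub_left, inner_sub_right, real_inner_comm (L x),
      ← hL.inner_left_eq_inner_right x y]
    ring
  have := hL.inner_nonneg_right (y - x)
  simp only [penalizedObjective, inner_add_left, real_inner_smul_left]
  linarith

theorem norm_gradient_penalizedObjective_sub_le {Lf : ℝ} (hc : 0 ≤ c)
    (hlip : ∀ x y : E, ‖gradient F x - gradient F y‖ ≤ Lf * ‖x - y‖) (a b : E) :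
    ‖(c • gradient F a + L a) - (c • gradient F b + L b)‖ ≤ (c * Lf + ‖L‖) * ‖a - b‖ := by
  calc ‖(c • gradient F a + L a) - (c • gradient F b + L b)‖
      = ‖c • (gradient F a - gradient F b) + L (a - b)‖ := by rw [map_sub, smul_sub]; abel_nf
    _ ≤ c * (Lf * ‖a - b‖) + ‖L‖ * ‖a - b‖ := by
      refine (norm_add_le _ _).trans (add_le_add ?_ (L.le_opNorm _))
      rw [norm_smul, Real.norm_of_nonneg hc]
      exact mul_le_mul_of_nonneg_left (hlip a b) hc
    _ = (c * Lf + ‖L‖) * ‖a - b‖ := by ring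

theorem penalizedObjective_gap_le (hconv : ConvexOn ℝ univ F) (hF : Differentiable ℝ F)
    (hc : 0 ≤ c) (hL : L.IsPositive) {Lf : ℝ}
    (hlip : ∀ x y : E, ‖gradient F x - gradient F y‖ ≤ Lf * ‖x - y‖) {M : ℝ} (hM : 0 < M)
    (hML : c * Lf + ‖L‖ ≤ M) {xs : E} (hxs : L xs = 0) (x : E) :
    c * (F x - F xs) + 1 / 2 * ⟪x - xs, L (x - xs)⟫
        + 1 / (2 * M) * ‖c • gradient F xs - (c • gradient F x + L x)‖ ^ 2
      ≤ ⟪c • gradient F x + L x, x - xs⟫ := by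
  have hcoco := add_inner_add_sq_norm_le_of_lipschitz_gradient
    (fun z => hasGradientAt_penalizedObjective (hF z) hL.isSymmetric)
    (penalizedObjective_add_inner_le hconv hF hc hL) hM
    (fun a b => (norm_gradient_penalizedObjective_sub_le hc hlip a b).trans
      (mul_le_mul_of_nonneg_right hML (norm_nonneg _))) x xs
  have hquad : ⟪x - xs, L (x - xs)⟫ = ⟪x, L x⟫ := by
    simp [hxs, inner_sub_left, ← hL.inner_left_eq_inner_right xs x]
  rw [hxs, add_zero, ← neg_sub x xs, inner_neg_right] at hcoco
  simp only [penalizedObjective, hxs, inner_zero_right] at hcoco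
  rw [hquad]
  linarith

end PenalizedObjective

theorem one_div_mul_norm_sub_half_smul_sq {E : Type*} [NormedAddCommGroup E]
    [InnerProductSpace ℝ E] {s : ℝ} (hs : s ≠ 0) (z g : E) :
    1 / s * ‖z - (s / 2) • g‖ ^ 2 = 1 / s * ‖z‖ ^ 2 - ⟪g, z⟫ + s / 4 * ‖g‖ ^ 2 := by
  rw [norm_sub_sq_real, real_inner_smul_right, norm_smul, mul_pow, Real.norm_eq_abs, sq_abs,
    real_inner_comm]
  field_simp
  ring

theorem rpow_two_mul_thetaSeq_mul_nonneg {h : ℝ} (hh : 0 ≤ h) (β : ℝ) (k : ℕ) :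
    0 ≤ (2 * thetaSeq k * h) ^ (-β) :=
  Real.rpow_nonneg (by rw [thetaSeq]; positivity) _

theorem rpow_mul_add_le_LSmooth (lambar Lf h β : ℝ) (k : ℕ) :
    (2 * thetaSeq k * h) ^ (-β) * Lf + lambar ≤ LSmooth lambar Lf h β k := by
  have hk : 2 * thetaSeq k * h = k * h := by rw [thetaSeq]; ring
  rw [LSmooth, hk]
  linarith [le_max_left lambar ((k * h) ^ (-β) * Lf), le_max_right lambar ((k * h) ^ (-β) * Lf)]

theorem gap_add_sq_norm_Gmap_le_inner {F : H → ℝ} (hF : Differentiable ℝ F)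
    (hconv : ConvexOn ℝ univ F) {Lf : ℝ}
    (hlip : ∀ x y : H, ‖gradient F x - gradient F y‖ ≤ Lf * ‖x - y‖)
    {L : H →L[ℝ] H} (hL : L.IsPositive) {Xs : H} (hXs : L Xs = 0) {h β σ : ℝ} (hh : 0 ≤ h)
    {k : ℕ} (hσ : 0 < σ) (hσL : σ ≤ 2 / LSmooth ‖L‖ Lf h β k) (x : H)
    (hr : ‖Gmap h β F L k x‖ ^ 2
      ≤ ‖(2 * thetaSeq k * h) ^ (-β) • gradient F Xs - Gmap h β F L k x‖ ^ 2) :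
    (2 * thetaSeq k * h) ^ (-β) * (F x - F Xs) + 1 / 2 * ⟪x - Xs, L (x - Xs)⟫
        + σ / 4 * ‖Gmap h β F L k x‖ ^ 2
      ≤ ⟪Gmap h β F L k x, x - Xs⟫ := by
  set M := LSmooth ‖L‖ Lf h β k
  have hc := rpow_two_mul_thetaSeq_mul_nonneg hh β k
  have hM : 0 < M := by
    by_contra! hM
    exact hσ.not_ge (hσL.trans (div_nonpos_of_nonneg_of_nonpos zero_le_two hM))
  have hgap := penalizedObjective_gap_le hconv hF hc hL hlip hM
    (rpow_mul_add_le_LSmooth ‖L‖ Lf h β k) hXs x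
  have hσM : σ / 4 ≤ 1 / (2 * M) := by
    rw [div_le_div_iff₀ four_pos (by positivity)]
    nlinarith [(le_div_iff₀ hM).1 hσL]
  have := mul_le_mul hσM hr (sq_nonneg _) (by positivity)
  unfold Gmap at this ⊢
  linarith

theorem lyapunov_initial_step_general
    (F : H → ℝ) (hF : Differentiable ℝ F) (hconv : ConvexOn ℝ Set.univ F)
    (Lf : ℝ)
    (hlip : ∀ x y : H, ‖gradient F x - gradient F y‖ ≤ Lf * ‖x - y‖)
    (L : H →L[ℝ] H) (hsym : ∀ x y : H, ⟪L x, y⟫ = ⟪x, L y⟫)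
    (hpsd : ∀ x : H, 0 ≤ ⟪x, L x⟫)
    (lambar : ℝ) (hlam : ‖L‖ = lambar)
    (Xs : H) (hXs : L Xs = 0) (hmin : ∀ Y : H, F Xs ≤ F Y)
    (h β : ℝ) (hh : 0 < h)
    (X Z : ℕ → H) (s : ℕ → ℝ)
    (hZupd : ∀ k, 1 ≤ k → Z (k + 1) = Z k - (s k * thetaSeq k) • Gmap h β F L k (X k))
    (hinit : X 0 = Z 0)
    (hZ1 : Z 1 = Z 0) (hX1 : X 1 = X 0)
    (hs0 : 0 < s 0) (hs01 : s 0 ≤ s 1)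
    (hs1 : s 1 ≤ 2 / LSmooth lambar Lf h β 1)
    (hr1 : 0 ≤ rSeq h β F L Xs X 0) :
    VSeq h β F L Xs X Z s 1 ≤ (1 / s 0) * ‖Z 1 - Xs‖ ^ 2 := by
  set G := Gmap h β F L 1 (X 1)
  have hs1pos : 0 < s 1 := hs0.trans_le hs01
  have hLpos : L.IsPositive :=
    L.isPositive_iff.2 ⟨hsym, fun x => real_inner_comm x (L x) ▸ hpsd x⟩
  have hr : ‖G‖ ^ 2 ≤ ‖(2 * thetaSeq 1 * h) ^ (-β) • gradient F Xs - G‖ ^ 2 := by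
    simp only [rSeq, Nat.zero_add, inner_sub_right, real_inner_self_eq_norm_sq] at hr1
    rw [norm_sub_sq_real]
    linarith
  have hstep := gap_add_sq_norm_Gmap_le_inner hF hconv hlip hLpos hXs hh.le hs1pos
    (hlam ▸ hs1) (X 1) hr
  have hZ2 : 1 / s 1 * ‖Z (1 + 1) - Xs‖ ^ 2
      = 1 / s 1 * ‖Z 1 - Xs‖ ^ 2 - ⟪G, X 1 - Xs⟫ + s 1 / 4 * ‖G‖ ^ 2 := by
    rw [hZupd 1 le_rfl, show thetaSeq 1 = 1 / 2 by norm_num [thetaSeq], sub_right_comm,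
      mul_one_div, one_div_mul_norm_sub_half_smul_sq hs1pos.ne', hZ1, ← hinit, ← hX1]
  have hA : ASeq 1 = 1 / 3 := by norm_num [ASeq, cSeq, thetaSeq]
  have hc := rpow_two_mul_thetaSeq_mul_nonneg hh.le β 1
  have hs : 1 / s 1 * ‖Z 1 - Xs‖ ^ 2 ≤ 1 / s 0 * ‖Z 1 - Xs‖ ^ 2 :=
    mul_le_mul_of_nonneg_right (one_div_le_one_div_of_le hs0 hs01) (sq_nonneg _)
  rw [VSeq, hA, hZ2]
  linarith [mul_nonneg hc (sub_nonneg.2 (hmin (X 1))), hpsd (X 1 - Xs),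
    mul_nonneg hs1pos.le (sq_nonneg ‖G‖)]

/-- Initial step (proof of Theorem 2, Part II): `V₁ ≤ V'₀ = (1/s₀)‖Z₁ − X*‖²`. -/
theorem lyapunov_initial_step
    (F : H → ℝ) (hF : Differentiable ℝ F) (hconv : ConvexOn ℝ Set.univ F)
    (Lf : ℝ) (hLf : 0 < Lf)
    (hlip : ∀ x y : H, ‖gradient F x - gradient F y‖ ≤ Lf * ‖x - y‖)
    (L : H →L[ℝ] H) (hsym : ∀ x y : H, ⟪L x, y⟫ = ⟪x, L y⟫)
    (hpsd : ∀ x : H, 0 ≤ ⟪x, L x⟫)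
    (lambar : ℝ) (hlam : ‖L‖ = lambar)
    (Xs : H) (hXs : L Xs = 0) (hmin : ∀ Y : H, F Xs ≤ F Y)
    (h β : ℝ) (hh : 0 < h) (hβ0 : 0 < β) (hβ2 : β < 2)
    (X Xp Z : ℕ → H) (s : ℕ → ℝ)
    (hspos : ∀ k, 1 ≤ k → 0 < s k)
    (hXp : ∀ k, 1 ≤ k → Xp k = X k - (s k / 2) • Gmap h β F L k (X k))
    (hZupd : ∀ k, 1 ≤ k → Z (k + 1) = Z k - (s k * thetaSeq k) • Gmap h β F L k (X k))
    (hXupd : ∀ k, 1 ≤ k → X (k + 1) = (thetaSeq k ^ 2 / thetaSeq (k + 1) ^ 2) • Xp k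
        + (1 - thetaSeq k ^ 2 / thetaSeq (k + 1) ^ 2) • Z (k + 1))
    (hinit : X 0 = Z 0)
    (hXp0 : Xp 0 = X 0) (hZ1 : Z 1 = Z 0) (hX1 : X 1 = X 0)
    (hs0 : 0 < s 0) (hs01 : s 0 ≤ s 1)
    (hs1 : s 1 ≤ 2 / LSmooth lambar Lf h β 1)
    (hr1 : 0 ≤ rSeq h β F L Xs X 0) :
    VSeq h β F L Xs X Z s 1 ≤ (1 / s 0) * ‖Z 1 - Xs‖ ^ 2 :=
  lyapunov_initial_step_general F hF hconv Lf hlip L hsym hpsd lambar hlam Xs hXs hmin h β hh X Z s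
    hZupd hinit hZ1 hX1 hs0 hs01 hs1 hr1
end
end

section
/- (Part III of the proof of Theorem 2: rate extraction.) Fix k ≥ 1 and suppose 0 < s_k ≤ 2/L̃_k and that the Lyapunov bound V_k ≤ (1/s₀)·‖X₀ − X*‖² holds for some s₀ > 0. Then the half-step iterate X_k⁺ = X_k − (s_k/2)·G_k(X_k) satisfies F(X_k⁺) − F* ≤ (2·h^β·‖X₀ − X*‖² / s₀) · k^{β−2}. -/
/-!
The half step `X_k⁺ = X_k − (s_k/2) G_k(X_k)` is a gradient step on
`φ_k = c_k (F − F*) + ½ ⟪· − X*, L̃ (· − X*)⟫`, `c_k = (kh)^{−β}`, whose gradient `G_k` is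
`(c_k L_f + λ̄)`-Lipschitz; since `2 max{a, b} ≥ a + b`, the condition `s_k ≤ 2/L̃_k` makes the step
at most `1/(c_k L_f + λ̄)`. The descent lemma then gives
`c_k (F(X_k⁺) − F*) ≤ φ_k(X_k⁺) ≤ φ_k(X_k) − (s_k/4)‖G_k(X_k)‖² ≤ V_k/(2A_k)`,
and `A_k ≥ k²/4` turns `V_k/(2 A_k c_k)` into the rate `2 h^β k^{β−2}` times `‖X₀ − X*‖²/s₀`.
-/

open scoped RealInnerProductSpace

noncomputable section

variable {H : Type*} [NormedAddCommGroup H] [InnerProductSpace ℝ H] [FiniteDimensional ℝ H]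

section GradientStep

variable {E : Type*} [NormedAddCommGroup E] [InnerProductSpace ℝ E]

theorem inner_add_map_add_le {L : E →L[ℝ] E} (hL : (L : E →ₗ[ℝ] E).IsSymmetric) (u d : E) :
    ⟪u + d, L (u + d)⟫ ≤ ⟪u, L u⟫ + 2 * ⟪L u, d⟫ + ‖L‖ * ‖d‖ ^ 2 := by
  have hd : ⟪d, L d⟫ ≤ ‖L‖ * ‖d‖ ^ 2 :=
    calc ⟪d, L d⟫ ≤ ‖d‖ * ‖L d‖ := real_inner_le_norm _ _
      _ ≤ ‖d‖ * (‖L‖ * ‖d‖) := by gcongr; exact L.le_opNorm d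
      _ = ‖L‖ * ‖d‖ ^ 2 := by ring
  have hcross : ⟪u, L d⟫ = ⟪L u, d⟫ := (hL u d).symm
  rw [map_add, inner_add_left, inner_add_right, inner_add_right, hcross, real_inner_comm d]
  linarith

/-- For `c = (2θ_k h)^{-β}` this is the bracket of `V_k` without its `‖G_k‖²` term, and its
gradient is `G_k = c ∇F + L`. -/
def penalizedGap (c : ℝ) (F : E → ℝ) (L : E →L[ℝ] E) (Xs Y : E) : ℝ :=
  c * (F Y - F Xs) + 1 / 2 * ⟪Y - Xs, L (Y - Xs)⟫

theorem mul_sub_le_penalizedGap {L : E →L[ℝ] E} (hpsd : ∀ x : E, 0 ≤ ⟪x, L x⟫) (c : ℝ)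
    (F : E → ℝ) (Xs Y : E) : c * (F Y - F Xs) ≤ penalizedGap c F L Xs Y := by
  unfold penalizedGap
  linarith [hpsd (Y - Xs)]

variable [CompleteSpace E]

theorem hasDerivAt_comp_add_smul_of_differentiable {F : E → ℝ} (hF : Differentiable ℝ F)
    (x d : E) (t : ℝ) :
    HasDerivAt (fun t : ℝ => F (x + t • d)) ⟪gradient F (x + t • d), d⟫ t := by
  have hline : HasDerivAt (fun t : ℝ => x + t • d) d t := by
    simpa using ((hasDerivAt_id t).smul_const d).const_add x
  have hgrad := (hF (x + t • d)).hasGradientAt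
  rw [hasGradientAt_iff_hasFDerivAt] at hgrad
  have hcomp := hgrad.comp_hasDerivAt t hline
  simp only [InnerProductSpace.toDual_apply_apply] at hcomp
  exact hcomp

theorem image_add_le_of_lipschitz_gradient {F : E → ℝ} (hF : Differentiable ℝ F) {Lf : ℝ}
    (hlip : ∀ x y : E, ‖gradient F x - gradient F y‖ ≤ Lf * ‖x - y‖) (x d : E) :
    F (x + d) ≤ F x + ⟪gradient F x, d⟫ + Lf / 2 * ‖d‖ ^ 2 := by
  set φ : ℝ → ℝ := fun t => F (x + t • d) - t * ⟪gradient F x, d⟫ - Lf / 2 * t ^ 2 * ‖d‖ ^ 2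
  have hφ : ∀ t : ℝ, HasDerivAt φ
      (⟪gradient F (x + t • d), d⟫ - ⟪gradient F x, d⟫ - Lf / 2 * (2 * t) * ‖d‖ ^ 2) t := by
    intro t
    have hlin := (hasDerivAt_id t).mul_const ⟪gradient F x, d⟫
    have hquad := ((hasDerivAt_pow 2 t).const_mul (Lf / 2)).mul_const (‖d‖ ^ 2)
    simp only [id, one_mul] at hlin
    exact ((hasDerivAt_comp_add_smul_of_differentiable hF x d t).sub hlin).sub
      (hquad.congr_deriv (by ring))
  have hφ_anti : AntitoneOn φ (Set.Icc 0 1) := by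
    have hdiff : Differentiable ℝ φ := fun t => (hφ t).differentiableAt
    refine antitoneOn_of_deriv_nonpos (convex_Icc 0 1) hdiff.continuous.continuousOn
      hdiff.differentiableOn fun t ht => ?_
    rw [interior_Icc] at ht
    rw [(hφ t).deriv, ← inner_sub_left]
    have hgap : ‖gradient F (x + t • d) - gradient F x‖ ≤ Lf * (t * ‖d‖) := by
      simpa [norm_smul, abs_of_pos ht.1] using hlip (x + t • d) x
    nlinarith [real_inner_le_norm (gradient F (x + t • d) - gradient F x) d,
      mul_le_mul_of_nonneg_right hgap (norm_nonneg d)]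
  have h01 := hφ_anti (Set.left_mem_Icc.2 zero_le_one) (Set.right_mem_Icc.2 zero_le_one)
    zero_le_one
  simp only [φ, zero_smul, add_zero, one_smul, zero_mul, sub_zero, one_mul, one_pow, mul_one,
    ne_eq, OfNat.ofNat_ne_zero, not_false_eq_true, zero_pow, mul_zero] at h01
  linarith

/-- The descent lemma for `penalizedGap`, whose gradient `c ∇F + L` is `(c L_f + ‖L‖)`-Lipschitz. -/
theorem penalizedGap_sub_smul_le {F : E → ℝ} (hF : Differentiable ℝ F) {Lf : ℝ}
    (hlip : ∀ x y : E, ‖gradient F x - gradient F y‖ ≤ Lf * ‖x - y‖) {L : E →L[ℝ] E}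
    (hL : (L : E →ₗ[ℝ] E).IsSymmetric) {Xs : E} (hXs : L Xs = 0) {c t : ℝ} (hc : 0 ≤ c)
    (ht : 0 ≤ t) (hstep : (c * Lf + ‖L‖) * t ≤ 1) (x : E) :
    penalizedGap c F L Xs (x - t • (c • gradient F x + L x))
      ≤ penalizedGap c F L Xs x - t / 2 * ‖c • gradient F x + L x‖ ^ 2 := by
  set G := c • gradient F x + L x
  have hF_step : F (x - t • G) ≤ F x + ⟪gradient F x, -t • G⟫ + Lf / 2 * ‖-t • G‖ ^ 2 := by
    simpa [sub_eq_add_neg] using image_add_le_of_lipschitz_gradient hF hlip x (-t • G)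
  have hL_step := inner_add_map_add_le hL (x - Xs) (-t • G)
  have hLx : L (x - Xs) = L x := by rw [map_sub, hXs, sub_zero]
  rw [show x - Xs + -t • G = x - t • G - Xs by rw [neg_smul]; abel, hLx] at hL_step
  have hinner : c * ⟪gradient F x, -t • G⟫ + ⟪L x, -t • G⟫ = -t * ‖G‖ ^ 2 := by
    rw [← real_inner_smul_left, ← inner_add_left, real_inner_smul_right,
      real_inner_self_eq_norm_sq]
  have hnorm : ‖-t • G‖ ^ 2 = t ^ 2 * ‖G‖ ^ 2 := by
    rw [norm_smul, norm_neg, Real.norm_of_nonneg ht]; ring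
  have hsmooth : (c * Lf + ‖L‖) * t * (t * ‖G‖ ^ 2) ≤ t * ‖G‖ ^ 2 :=
    mul_le_of_le_one_left (by positivity) hstep
  rw [hnorm] at hF_step hL_step
  rw [penalizedGap, penalizedGap, hLx]
  nlinarith [mul_le_mul_of_nonneg_left hF_step hc]

end GradientStep

theorem two_mul_thetaSeq (k : ℕ) : 2 * thetaSeq k = k := by
  unfold thetaSeq; ring

theorem ASeq_eq (k : ℕ) : ASeq k = (k : ℝ) ^ 2 * (k + 1) / (2 * (2 * k + 1)) := by
  unfold ASeq cSeq thetaSeq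
  push_cast
  rw [show (((k : ℝ) + 1) / 2) ^ 2 - ((k : ℝ) / 2) ^ 2 = (2 * k + 1) / 4 by ring]
  field_simp
  ring

theorem sq_div_four_le_ASeq (k : ℕ) : (k : ℝ) ^ 2 / 4 ≤ ASeq k := by
  rw [ASeq_eq, div_le_div_iff₀ (by norm_num) (by positivity)]
  nlinarith [sq_nonneg (k : ℝ)]

theorem ASeq_pos {k : ℕ} (hk : 1 ≤ k) : 0 < ASeq k := by
  have hk0 : (0 : ℝ) < k := by exact_mod_cast hk
  exact (by positivity : (0 : ℝ) < (k : ℝ) ^ 2 / 4).trans_le (sq_div_four_le_ASeq k)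

theorem Gmap_eq (h β : ℝ) (F : H → ℝ) (L : H →L[ℝ] H) (k : ℕ) (Y : H) :
    Gmap h β F L k Y = (((k : ℝ) * h) ^ (-β)) • gradient F Y + L Y := by
  rw [Gmap, two_mul_thetaSeq]

theorem mul_half_le_one_of_le_two_div_LSmooth {lambar Lf h β s : ℝ} {k : ℕ} (hs : 0 < s)
    (hstep : s ≤ 2 / LSmooth lambar Lf h β k) :
    (((k : ℝ) * h) ^ (-β) * Lf + lambar) * (s / 2) ≤ 1 := by
  have hLk : 0 < LSmooth lambar Lf h β k :=
    (div_pos_iff_of_pos_left two_pos).mp (hs.trans_le hstep)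
  have hsum : ((k : ℝ) * h) ^ (-β) * Lf + lambar ≤ LSmooth lambar Lf h β k := by
    unfold LSmooth
    linarith [le_max_left lambar (((k : ℝ) * h) ^ (-β) * Lf),
      le_max_right lambar (((k : ℝ) * h) ^ (-β) * Lf)]
  nlinarith [(le_div_iff₀ hLk).mp hstep]

theorem inv_two_mul_ASeq_mul_rpow_neg_le {h : ℝ} (hh : 0 < h) (β : ℝ) {k : ℕ} (hk : 1 ≤ k) :
    (2 * ASeq k * ((k : ℝ) * h) ^ (-β))⁻¹ ≤ 2 * h ^ β * (k : ℝ) ^ (β - 2) := by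
  have hk0 : (0 : ℝ) < k := by exact_mod_cast hk
  have hA : (k : ℝ) ^ 2 ≤ 4 * ASeq k := by linarith [sq_div_four_le_ASeq k]
  have hA0 : 0 < 2 * ASeq k := by linarith [ASeq_pos hk]
  have hinv : (2 * ASeq k)⁻¹ ≤ 2 / (k : ℝ) ^ 2 := by
    rw [inv_eq_one_div, div_le_div_iff₀ hA0 (by positivity)]
    linarith
  rw [Real.rpow_neg (by positivity), Real.mul_rpow hk0.le hh.le, Real.rpow_sub hk0,
    Real.rpow_two, mul_inv, inv_inv]
  calc (2 * ASeq k)⁻¹ * ((k : ℝ) ^ β * h ^ β) ≤ 2 / (k : ℝ) ^ 2 * ((k : ℝ) ^ β * h ^ β) := by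
        gcongr
    _ = 2 * h ^ β * ((k : ℝ) ^ β / (k : ℝ) ^ 2) := by ring

theorem two_mul_ASeq_mul_le_VSeq (h β : ℝ) (F : H → ℝ) (L : H →L[ℝ] H) (Xs : H) (X Z : ℕ → H)
    {s : ℕ → ℝ} {k : ℕ} (hs : 0 < s k) :
    2 * ASeq k * (penalizedGap (((k : ℝ) * h) ^ (-β)) F L Xs (X k)
        - s k / 4 * ‖Gmap h β F L k (X k)‖ ^ 2) ≤ VSeq h β F L Xs X Z s k := by
  have hZ : 0 ≤ 1 / s k * ‖Z (k + 1) - Xs‖ ^ 2 := by positivity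
  rw [VSeq, penalizedGap, two_mul_thetaSeq]
  linarith

theorem rate_extraction_general
    (F : H → ℝ) (hF : Differentiable ℝ F)
    (Lf : ℝ)
    (hlip : ∀ x y : H, ‖gradient F x - gradient F y‖ ≤ Lf * ‖x - y‖)
    (L : H →L[ℝ] H) (hsym : ∀ x y : H, ⟪L x, y⟫ = ⟪x, L y⟫)
    (hpsd : ∀ x : H, 0 ≤ ⟪x, L x⟫)
    (lambar : ℝ) (hlam : ‖L‖ = lambar)
    (Xs : H) (hXs : L Xs = 0)
    (h β : ℝ) (hh : 0 < h)
    (X Xp Z : ℕ → H) (s : ℕ → ℝ)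
    (hspos : ∀ k, 1 ≤ k → 0 < s k)
    (hXp : ∀ k, 1 ≤ k → Xp k = X k - (s k / 2) • Gmap h β F L k (X k))
    (k : ℕ) (hk : 1 ≤ k)
    (hstep : s k ≤ 2 / LSmooth lambar Lf h β k)
    (s₀ : ℝ) (hs₀ : 0 < s₀)
    (hV : VSeq h β F L Xs X Z s k ≤ (1 / s₀) * ‖X 0 - Xs‖ ^ 2) :
    F (Xp k) - F Xs ≤ (2 * h ^ β * ‖X 0 - Xs‖ ^ 2 / s₀) * (k : ℝ) ^ (β - 2) := by
  subst hlam
  set c := ((k : ℝ) * h) ^ (-β)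
  set G := Gmap h β F L k (X k)
  have hsk := hspos k hk
  have hc : 0 < c := by positivity
  have hA := ASeq_pos hk
  have hdesc : penalizedGap c F L Xs (Xp k) ≤ penalizedGap c F L Xs (X k) - s k / 4 * ‖G‖ ^ 2 := by
    have := penalizedGap_sub_smul_le hF hlip hsym hXs hc.le (by positivity)
      (mul_half_le_one_of_le_two_div_LSmooth hsk hstep) (X k)
    rw [← Gmap_eq, ← hXp k hk] at this
    linarith
  have hgap : 2 * ASeq k * c * (F (Xp k) - F Xs) ≤ 1 / s₀ * ‖X 0 - Xs‖ ^ 2 :=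
    calc 2 * ASeq k * c * (F (Xp k) - F Xs) = 2 * ASeq k * (c * (F (Xp k) - F Xs)) := by ring
      _ ≤ 2 * ASeq k * (penalizedGap c F L Xs (X k) - s k / 4 * ‖G‖ ^ 2) := by
        gcongr; exact (mul_sub_le_penalizedGap hpsd c F Xs (Xp k)).trans hdesc
      _ ≤ VSeq h β F L Xs X Z s k := two_mul_ASeq_mul_le_VSeq h β F L Xs X Z hsk
      _ ≤ 1 / s₀ * ‖X 0 - Xs‖ ^ 2 := hV
  calc F (Xp k) - F Xs ≤ (2 * ASeq k * c)⁻¹ * (1 / s₀ * ‖X 0 - Xs‖ ^ 2) := by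
        rw [inv_mul_eq_div, le_div_iff₀ (by positivity)]; linarith
    _ ≤ 2 * h ^ β * (k : ℝ) ^ (β - 2) * (1 / s₀ * ‖X 0 - Xs‖ ^ 2) := by
        gcongr; exact inv_two_mul_ASeq_mul_rpow_neg_le hh β hk
    _ = (2 * h ^ β * ‖X 0 - Xs‖ ^ 2 / s₀) * (k : ℝ) ^ (β - 2) := by ring

/-- Rate extraction (proof of Theorem 2, Part III): if `V_k ≤ (1/s₀)‖X₀ − X*‖²`,
then the half-step iterate `X_k⁺` satisfies
`F(X_k⁺) − F* ≤ (2h^β ‖X₀ − X*‖²/s₀)·k^{β−2}`. -/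
theorem rate_extraction
    (F : H → ℝ) (hF : Differentiable ℝ F) (hconv : ConvexOn ℝ Set.univ F)
    (Lf : ℝ) (hLf : 0 < Lf)
    (hlip : ∀ x y : H, ‖gradient F x - gradient F y‖ ≤ Lf * ‖x - y‖)
    (L : H →L[ℝ] H) (hsym : ∀ x y : H, ⟪L x, y⟫ = ⟪x, L y⟫)
    (hpsd : ∀ x : H, 0 ≤ ⟪x, L x⟫)
    (lambar : ℝ) (hlam : ‖L‖ = lambar)
    (Xs : H) (hXs : L Xs = 0) (hmin : ∀ Y : H, F Xs ≤ F Y)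
    (h β : ℝ) (hh : 0 < h) (hβ0 : 0 < β) (hβ2 : β < 2)
    (X Xp Z : ℕ → H) (s : ℕ → ℝ)
    (hspos : ∀ k, 1 ≤ k → 0 < s k)
    (hXp : ∀ k, 1 ≤ k → Xp k = X k - (s k / 2) • Gmap h β F L k (X k))
    (hZupd : ∀ k, 1 ≤ k → Z (k + 1) = Z k - (s k * thetaSeq k) • Gmap h β F L k (X k))
    (hXupd : ∀ k, 1 ≤ k → X (k + 1) = (thetaSeq k ^ 2 / thetaSeq (k + 1) ^ 2) • Xp k
        + (1 - thetaSeq k ^ 2 / thetaSeq (k + 1) ^ 2) • Z (k + 1))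
    (k : ℕ) (hk : 1 ≤ k)
    (hstep : s k ≤ 2 / LSmooth lambar Lf h β k)
    (s₀ : ℝ) (hs₀ : 0 < s₀)
    (hV : VSeq h β F L Xs X Z s k ≤ (1 / s₀) * ‖X 0 - Xs‖ ^ 2) :
    F (Xp k) - F Xs ≤ (2 * h ^ β * ‖X 0 - Xs‖ ^ 2 / s₀) * (k : ℝ) ^ (β - 2) :=
  rate_extraction_general F hF Lf hlip L hsym hpsd lambar hlam Xs hXs h β hh X Xp Z s hspos hXp k hk
    hstep s₀ hs₀ hV
end
end
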